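/- Let A ⊆ G be finite with |A+A| ≤ K|A| and suppose |kA| ≥ K^{k-ε}|A| for some integer k ≥ 3 and real ε > 0. Then there exists A' ⊆ A with |A'| ≥ |A|/2 and dim(A') ≪ 2^k K^ε log|kA|. -/

import Mathlib

open Finset Pointwise

def Dissociated {G : Type*} [AddCommGroup G] (Λ : Finset G) : Prop :=
  ∀ ε : G → ℤ, (∀ g, ε g = -1 ∨ ε g = 0 ∨ ε g = 1) → (∀ g ∉ Λ, ε g = 0) →
    ∑ g ∈ Λ, ε g • g = 0 → ∀ g, ε g = 0

def nsum {G : Type*} [AddCommGroup G] [DecidableEq G] (A : Finset G) : ℕ → Finset G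
  | 0 => {0}
  | k + 1 => nsum A k + A

/-!
Cover half of `A` greedily: while the uncovered part `R` of `A` has more than `|A|/2` elements,
`|R + A| ≤ 2K|R|`, so Petridis' minimal-ratio subset `X ⊆ R` has `|X + kA| ≤ (2K)^k |X|`.
The union `A'` of these pieces has `|A' + kA| ≤ (2K)^k |A| ≤ L |kA|` with `L = 2^k K^ε`, since
`|kA| ≥ K^{k-ε}|A|`. For dissociated `Λ ⊆ A'` the `j`-element subsets of `Λ` have distinct sums
in `jΛ`, so Plünnecke–Ruzsa gives `binom(|Λ|, j) ≤ |jΛ| ≤ L^j |kA|`; taking `2^j ≈ |kA|` yields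
`|Λ| ≤ 9 L log |kA|`.
-/

open Real

lemma add_one_sub_le_two_mul_of_choose_le {d j T : ℕ} {L : ℝ} (hj : 1 ≤ j) (hT : T ≤ 2 ^ j)
    (hL : 0 ≤ L) (h : (d.choose j : ℝ) ≤ L ^ j * T) : (d : ℝ) + 1 - j ≤ 2 * j * L := by
  have hpow : ((d + 1 - j : ℕ) : ℝ) ^ j ≤ (2 * j * L) ^ j :=
    calc ((d + 1 - j : ℕ) : ℝ) ^ j ≤ j.factorial * d.choose j := by
          rw [← div_le_iff₀' (by positivity)]; exact Nat.pow_le_choose j d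
      _ ≤ j ^ j * (L ^ j * 2 ^ j) := by
          gcongr
          · exact_mod_cast Nat.factorial_le_pow j
          · exact h.trans (by gcongr; exact_mod_cast hT)
      _ = (2 * j * L) ^ j := by ring
  have htrunc : (d : ℝ) + 1 ≤ ((d + 1 - j : ℕ) : ℝ) + j := by
    exact_mod_cast (show d + 1 ≤ d + 1 - j + j by omega)
  linarith [le_of_pow_le_pow_left₀ (by omega) (by positivity) hpow]

lemma le_mul_log_of_forall_choose_le {d T : ℕ} {L : ℝ} (hT : 2 ≤ T) (hL : 1 ≤ L)
    (h : ∀ j, (d.choose j : ℝ) ≤ L ^ j * T) : (d : ℝ) ≤ 9 * L * log T := by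
  set j := Nat.clog 2 T
  have hj : 1 ≤ j := Nat.clog_pos one_lt_two hT
  have hdj := add_one_sub_le_two_mul_of_choose_le hj (Nat.le_pow_clog one_lt_two T)
    (by linarith) (h j)
  -- `2 ^ (j - 1) < T` and `log 2 > 2 / 3` give `j ≤ 3 log T`
  have hjlog : (j : ℝ) ≤ 3 * log T := by
    have hlt : ((2 : ℕ) ^ (j - 1) : ℝ) < T := by
      exact_mod_cast Nat.pow_pred_clog_lt_self one_lt_two hT
    have h2T : log 2 ≤ log T := log_le_log (by norm_num) (by exact_mod_cast hT)
    have := log_lt_log (by positivity) hlt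
    rw [Nat.cast_ofNat, log_pow, Nat.cast_sub hj, Nat.cast_one] at this
    nlinarith [log_two_gt_d9]
  nlinarith

section

variable {G : Type*} [AddCommGroup G] [DecidableEq G]

lemma nsum_eq_nsmul (A : Finset G) : ∀ k, nsum A k = k • A
  | 0 => by rw [zero_nsmul]; rfl
  | k + 1 => by rw [nsum, nsum_eq_nsmul A k, succ_nsmul]

lemma card_add_nsmul_le_of_forall_subset {X B : Finset G} (hX : X.Nonempty)
    (hmin : ∀ X' ⊆ X, #(X + B) * #X' ≤ #(X' + B) * #X) (n : ℕ) :
    (#(X + n • B) : ℝ) ≤ (#(X + B) / #X) ^ n * #X := by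
  have hX₀ : (0 : ℝ) < #X := by exact_mod_cast hX.card_pos
  induction n with
  | zero => simp
  | succ n ih =>
    calc (#(X + (n + 1) • B) : ℝ) = #(n • B + X + B) := by
          rw [succ_nsmul, ← add_assoc, add_comm X]
      _ ≤ #(X + B) * #(n • B + X) / #X := by
          rw [le_div_iff₀ hX₀]; exact_mod_cast pluennecke_petridis_inequality_add _ hmin
      _ ≤ #(X + B) * ((#(X + B) / #X) ^ n * #X) / #X := by rw [add_comm (n • B)]; gcongr
      _ = (#(X + B) / #X) ^ (n + 1) * #X := by rw [pow_succ]; field_simp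

lemma exists_subset_card_add_nsmul_le {A : Finset G} (hA : A.Nonempty) (B : Finset G) :
    ∃ X ⊆ A, X.Nonempty ∧ ∀ n : ℕ, (#(X + n • B) : ℝ) ≤ (#(A + B) / #A) ^ n * #X := by
  have hA' : A ∈ A.powerset.erase ∅ := mem_erase_of_ne_of_mem hA.ne_empty (mem_powerset_self _)
  obtain ⟨X, hX, hXmin⟩ :=
    exists_min_image (A.powerset.erase ∅) (fun X ↦ (#(X + B) / #X : ℝ)) ⟨A, hA'⟩
  rw [mem_erase, mem_powerset, ← nonempty_iff_ne_empty] at hX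
  obtain ⟨hX, hXA⟩ := hX
  have hmin : ∀ X' ⊆ X, #(X + B) * #X' ≤ #(X' + B) * #X := by
    intro X' hX'
    obtain rfl | hX'₀ := X'.eq_empty_or_nonempty
    · simp
    have := hXmin X' (mem_erase_of_ne_of_mem hX'₀.ne_empty (mem_powerset.2 (hX'.trans hXA)))
    rw [div_le_div_iff₀ (by exact_mod_cast hX.card_pos) (by exact_mod_cast hX'₀.card_pos)] at this
    exact_mod_cast this
  refine ⟨X, hXA, hX, fun n ↦ (card_add_nsmul_le_of_forall_subset hX hmin n).trans ?_⟩
  gcongr ?_ ^ _ * _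
  exact hXmin A hA'

lemma exists_card_le_two_mul_card_add_nsmul_le {A B : Finset G} {L : ℝ}
    (hL : ∀ X ⊆ A, #A < 2 * #X → (#(X + B) : ℝ) ≤ L * #X) (k : ℕ) :
    ∃ U ⊆ A, #A ≤ 2 * #U ∧ (#(U + k • B) : ℝ) ≤ L ^ k * #U := by
  suffices ∀ R ⊆ A, (#(A \ R + k • B) : ℝ) ≤ L ^ k * #(A \ R) →
      ∃ U ⊆ A, #A ≤ 2 * #U ∧ (#(U + k • B) : ℝ) ≤ L ^ k * #U from
    this A Subset.rfl (by simp)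
  intro R
  induction R using Finset.strongInduction with
  | H R ih =>
    intro hRA hcov
    by_cases hhalf : #A ≤ 2 * #(A \ R)
    · exact ⟨A \ R, sdiff_subset, hhalf, hcov⟩
    have hRlarge : #A < 2 * #R := by
      have := card_le_card hRA
      rw [card_sdiff_of_subset hRA] at hhalf
      omega
    have hR : R.Nonempty := card_pos.1 (by omega)
    obtain ⟨X, hXR, hX, hXk⟩ := exists_subset_card_add_nsmul_le hR B
    replace hXk : (#(X + k • B) : ℝ) ≤ L ^ k * #X := by
      refine (hXk k).trans ?_
      gcongr ?_ ^ _ * _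
      rw [div_le_iff₀ (by exact_mod_cast hR.card_pos)]
      exact hL R hRA hRlarge
    have hcov' : A \ (R \ X) = A \ R ∪ X := by
      rw [sdiff_sdiff_right', inf_eq_right.2 (hXR.trans hRA), sup_eq_union]
    refine ih (R \ X) (sdiff_ssubset hXR hX) (sdiff_subset.trans hRA) ?_
    rw [hcov']
    calc (#(A \ R ∪ X + k • B) : ℝ) ≤ #(A \ R + k • B) + #(X + k • B) := by
          rw [union_add]; exact_mod_cast card_union_le _ _
      _ ≤ L ^ k * #(A \ R ∪ X) := by
          rw [card_union_of_disjoint (sdiff_disjoint.mono_right hXR)]; push_cast; linarith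

lemma Dissociated.addDissociated {Λ : Finset G} (hΛ : Dissociated Λ) :
    AddDissociated (Λ : Set G) := by
  rintro s hs t ht hst
  let ε : G → ℤ := fun g ↦ (if g ∈ s then 1 else 0) - (if g ∈ t then 1 else 0)
  have hε : ∀ g, ε g = 0 := by
    refine hΛ ε (fun g ↦ by grind) (fun g hg ↦ ?_) ?_
    · simp [ε, show g ∉ s from fun h ↦ hg (hs h), show g ∉ t from fun h ↦ hg (ht h)]
    · simp only [ε, sub_smul, ite_smul, one_smul, zero_smul, sum_sub_distrib, sum_ite_mem,
        inter_eq_right.2 (coe_subset.1 hs), inter_eq_right.2 (coe_subset.1 ht)]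
      exact sub_eq_zero.2 hst
  ext g
  have := hε g
  grind

lemma sum_mem_card_nsmul {s t : Finset G} (h : s ⊆ t) : ∑ x ∈ s, x ∈ #s • t := by
  simpa [← coe_nsmul] using Set.finsetSum_mem_finsetSum s (fun _ ↦ (t : Set G)) id h

lemma AddDissociated.choose_card_le_card_nsmul {Λ : Finset G}
    (hΛ : AddDissociated (Λ : Set G)) (j : ℕ) : (#Λ).choose j ≤ #(j • Λ) := by
  rw [← card_powersetCard]
  refine card_le_card_of_injOn (∑ x ∈ ·, x) (fun s hs ↦ ?_) (fun s hs t ht ↦ hΛ ?_ ?_)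
  · obtain ⟨hsΛ, rfl⟩ := mem_powersetCard.1 hs
    exact sum_mem_card_nsmul hsΛ
  · exact coe_subset.2 (mem_powersetCard.1 hs).1
  · exact coe_subset.2 (mem_powersetCard.1 ht).1

lemma AddDissociated.card_le_mul_log {T Λ : Finset G} (hΛ : AddDissociated (Λ : Set G))
    (hT : 2 ≤ #T) {L : ℝ} (hL : 1 ≤ L) (hTΛ : (#(T + Λ) : ℝ) ≤ L * #T) :
    (#Λ : ℝ) ≤ 9 * L * log #T := by
  have hT₀ : T.Nonempty := card_pos.1 (by omega)
  refine le_mul_log_of_forall_choose_le hT hL fun j ↦ ?_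
  calc ((#Λ).choose j : ℝ) ≤ #(j • Λ) := by exact_mod_cast hΛ.choose_card_le_card_nsmul j
    _ ≤ (#(T + Λ) / #T) ^ j * #T := by
        have := NNRat.cast_le (K := ℝ) |>.2 (pluennecke_ruzsa_inequality_nsmul_add hT₀ Λ j)
        push_cast at this
        exact this
    _ ≤ L ^ j * #T := by
        gcongr
        rwa [div_le_iff₀ (by positivity)]

end

/-- If `|A+A| ≤ K|A|` and `|kA| ≥ K^{k-ε}|A|` for some `k ≥ 3`, `ε > 0`, then there is
`A' ⊆ A` with `|A'| ≥ |A|/2` whose additive dimension is `O(2^k K^ε log |kA|)`,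
i.e. every dissociated subset of `A'` has cardinality at most `C 2^k K^ε log |kA|`. -/
theorem stmt2 :
    ∃ C : ℝ, 0 < C ∧ ∀ (G : Type*) [AddCommGroup G] [DecidableEq G]
      (A : Finset G) (K ε : ℝ) (k : ℕ),
      2 ≤ A.card → 1 ≤ K → 0 < ε → 3 ≤ k →
      ((A + A).card : ℝ) ≤ K * A.card →
      K ^ ((k : ℝ) - ε) * A.card ≤ ((nsum A k).card : ℝ) →
      ∃ A' ⊆ A, (A.card : ℝ) ≤ 2 * A'.card ∧
        ∀ Λ ⊆ A', Dissociated Λ →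
          (Λ.card : ℝ) ≤ C * 2 ^ k * K ^ ε * Real.log ((nsum A k).card) := by
  refine ⟨9, by norm_num, fun G _ _ A K ε k hA hK hε hk hAA hkA ↦ ?_⟩
  rw [nsum_eq_nsmul] at hkA ⊢
  have hlarge : ∀ X ⊆ A, #A < 2 * #X → (#(X + A) : ℝ) ≤ 2 * K * #X := fun X hX hXA ↦
    calc (#(X + A) : ℝ) ≤ #(A + A) := by exact_mod_cast card_le_card (add_subset_add_right hX)
      _ ≤ K * #A := hAA
      _ ≤ K * (2 * #X) := by gcongr; exact_mod_cast hXA.le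
      _ = 2 * K * #X := by ring
  obtain ⟨A', hA'A, hA'half, hA'k⟩ := exists_card_le_two_mul_card_add_nsmul_le hlarge k
  refine ⟨A', hA'A, by exact_mod_cast hA'half, fun Λ hΛA' hΛ ↦ ?_⟩
  have hkA_card : 2 ≤ #(k • A) := hA.trans (card_le_card_nsmul (hn := by omega))
  have hK₀ : 0 < K := by linarith
  have hΛk : (#(k • A + Λ) : ℝ) ≤ 2 ^ k * K ^ ε * #(k • A) := calc
    (#(k • A + Λ) : ℝ) ≤ #(A' + k • A) := by
        rw [add_comm A']; exact_mod_cast card_le_card (add_subset_add_left hΛA')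
    _ ≤ (2 * K) ^ k * #A := hA'k.trans (by gcongr)
    _ = 2 ^ k * K ^ ε * (K ^ ((k : ℝ) - ε) * #A) := by
        rw [mul_pow, ← rpow_natCast K k, ← add_sub_cancel ε (k : ℝ), rpow_add hK₀,
          add_sub_cancel]
        ring
    _ ≤ 2 ^ k * K ^ ε * #(k • A) := by gcongr
  have hL : 1 ≤ (2 : ℝ) ^ k * K ^ ε :=
    one_le_mul_of_one_le_of_one_le (one_le_pow₀ one_le_two) (one_le_rpow hK hε.le)
  simpa only [mul_assoc] using hΛ.addDissociated.card_le_mul_log hkA_card hL hΛk
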